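/- For all natural numbers M ≥ 1, all j with 0 ≤ j ≤ M, the identity ∑_{k=0}^{j} (-1)^{j-k} 2^{4k} ((4M+2)/(2k+1)) C(2(M−k), j−k) C(M+k, 2k) = C(4M+2, 2j+1) holds, where C(n,k) denotes the binomial coefficient (with C(n,k)=0 if k<0 or n<k). -/

import Mathlib

/-!
Put `a = (1 + X)²` and `b = (1 - X)²`, so that `a - b = 4X` and `ab = (1 - X²)²`. Every odd power
difference is a polynomial in `a - b` and `ab`:
`a^(2M+1) - b^(2M+1) = ∑ₖ c(M,k) (a - b)^(2k+1) (ab)^(M-k)` with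
`c(M,k) = C(M+k+1, 2k+1) + C(M+k, 2k+1) = (2M+1)/(2k+1) · C(M+k, 2k)`.
It follows by induction on `M` from
`a^(2M+5) - b^(2M+5) = ((a - b)² + 2ab) (a^(2M+3) - b^(2M+3)) - (ab)² (a^(2M+1) - b^(2M+1))`,
which on the coefficients is a second difference of binomial coefficients, computed by Pascal's
rule. The identity is the coefficient of `X^(2j+1)` on both sides.
-/

open Polynomial Finset

variable {R : Type*} [CommRing R]

theorem Nat.choose_add_two_add_choose (n m : ℕ) :
    (n + 2).choose (m + 2) + n.choose (m + 2) = 2 * (n + 1).choose (m + 2) + n.choose m := by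
  have h1 : (n + 2).choose (m + 2) = (n + 1).choose (m + 1) + (n + 1).choose (m + 2) :=
    Nat.choose_succ_succ' _ _
  have h2 : (n + 1).choose (m + 2) = n.choose (m + 1) + n.choose (m + 2) :=
    Nat.choose_succ_succ' _ _
  have h3 : (n + 1).choose (m + 1) = n.choose m + n.choose (m + 1) := Nat.choose_succ_succ' _ _
  omega

theorem Finset.sum_range_ite_le {β : Type*} [AddCommMonoid β] {f : ℕ → β} {n : ℕ}
    (hf : ∀ k, n ≤ k → f k = 0) (j : ℕ) :
    ∑ k ∈ range n, (if k ≤ j then f k else 0) = ∑ k ∈ range (j + 1), f k := by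
  rw [← sum_filter]
  refine sum_subset (fun k => by simp) fun k hk hk' => hf k ?_
  simp only [mem_range, mem_filter] at hk hk'
  omega

def powSubPowCoeff (M k : ℕ) : ℕ := (M + k + 1).choose (2 * k + 1) + (M + k).choose (2 * k + 1)

namespace powSubPowCoeff

theorem eq_zero_of_lt {M k : ℕ} (h : M < k) : powSubPowCoeff M k = 0 := by
  simp only [powSubPowCoeff, Nat.add_eq_zero_iff]
  constructor <;> exact Nat.choose_eq_zero_of_lt (by omega)

theorem zero_right (M : ℕ) : powSubPowCoeff M 0 = 2 * M + 1 := by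
  simp only [powSubPowCoeff, add_zero, mul_zero, zero_add, Nat.choose_one_right]
  ring

theorem add_two_succ_add_succ (M k : ℕ) :
    powSubPowCoeff (M + 2) (k + 1) + powSubPowCoeff M (k + 1)
      = 2 * powSubPowCoeff (M + 1) (k + 1) + powSubPowCoeff (M + 1) k := by
  have h1 := Nat.choose_add_two_add_choose (M + k + 2) (2 * k + 1)
  have h2 := Nat.choose_add_two_add_choose (M + k + 1) (2 * k + 1)
  simp only [powSubPowCoeff]
  ring_nf at h1 h2 ⊢
  omega

theorem two_mul_add_one_mul (M k : ℕ) :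
    (2 * k + 1) * powSubPowCoeff M k = (2 * M + 1) * (M + k).choose (2 * k) := by
  rcases lt_or_ge M k with h | h
  · rw [eq_zero_of_lt h, Nat.choose_eq_zero_of_lt (by omega), mul_zero, mul_zero]
  have hpascal := Nat.choose_succ_succ' (M + k) (2 * k)
  have hsucc := Nat.choose_succ_right_eq (M + k) (2 * k)
  rw [powSubPowCoeff, hpascal]
  obtain ⟨i, rfl⟩ := Nat.exists_eq_add_of_le h
  rw [show k + i + k - 2 * k = i by omega] at hsucc
  linear_combination 2 * hsucc

theorem cast_eq_div (M k : ℕ) :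
    (powSubPowCoeff M k : ℚ) = (2 * M + 1) / (2 * k + 1) * (M + k).choose (2 * k) := by
  have h := congrArg (Nat.cast : ℕ → ℚ) (two_mul_add_one_mul M k)
  push_cast at h
  field_simp
  linear_combination h

theorem pow_mul_sum (p : R) (f : ℕ → R) (M i : ℕ) :
    p ^ i * ∑ k ∈ range (M + 1), (powSubPowCoeff M k : R) * f k * p ^ (M - k)
      = ∑ k ∈ range (M + i + 1), (powSubPowCoeff M k : R) * f k * p ^ (M + i - k) := by
  rw [mul_sum, ← sum_range_add_sum_Ico _ (by omega : M + 1 ≤ M + i + 1)]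
  have hvanish : ∀ k ∈ Ico (M + 1) (M + i + 1),
      (powSubPowCoeff M k : R) * f k * p ^ (M + i - k) = 0 := by
    intro k hk
    rw [eq_zero_of_lt (by simp only [mem_Ico] at hk; omega), Nat.cast_zero, zero_mul, zero_mul]
  rw [sum_eq_zero hvanish, add_zero]
  refine sum_congr rfl fun k hk => ?_
  rw [show M + i - k = i + (M - k) by simp only [mem_range] at hk; omega, pow_add]
  ring

theorem sum_add_two_add_sum (f : ℕ → R) (M : ℕ) :
    ∑ k ∈ range (M + 3), (powSubPowCoeff (M + 2) k : R) * f k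
        + ∑ k ∈ range (M + 3), (powSubPowCoeff M k : R) * f k
      = 2 * ∑ k ∈ range (M + 3), (powSubPowCoeff (M + 1) k : R) * f k
        + ∑ k ∈ range (M + 2), (powSubPowCoeff (M + 1) k : R) * f (k + 1) := by
  have hsucc : ∑ k ∈ range (M + 2), (powSubPowCoeff (M + 2) (k + 1) : R) * f (k + 1)
        + ∑ k ∈ range (M + 2), (powSubPowCoeff M (k + 1) : R) * f (k + 1)
      = 2 * ∑ k ∈ range (M + 2), (powSubPowCoeff (M + 1) (k + 1) : R) * f (k + 1)
        + ∑ k ∈ range (M + 2), (powSubPowCoeff (M + 1) k : R) * f (k + 1) := by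
    rw [← sum_add_distrib, mul_sum, ← sum_add_distrib]
    refine sum_congr rfl fun k _ => ?_
    have hc := congrArg (Nat.cast : ℕ → R) (add_two_succ_add_succ M k)
    push_cast at hc
    rw [← add_mul, hc]
    ring
  simp only [sum_range_succ' _ (M + 2), zero_right]
  push_cast
  linear_combination hsucc

theorem sum_recurrence (d p : R) (M : ℕ) :
    ∑ k ∈ range (M + 3), (powSubPowCoeff (M + 2) k : R) * d ^ (2 * k + 1) * p ^ (M + 2 - k)
      = (d ^ 2 + 2 * p) * ∑ k ∈ range (M + 2),
          (powSubPowCoeff (M + 1) k : R) * d ^ (2 * k + 1) * p ^ (M + 1 - k)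
        - p ^ 2 * ∑ k ∈ range (M + 1), (powSubPowCoeff M k : R) * d ^ (2 * k + 1) * p ^ (M - k) := by
  have h := sum_add_two_add_sum (fun k => d ^ (2 * k + 1) * p ^ (M + 2 - k)) M
  have h0 : p ^ 2 * ∑ k ∈ range (M + 1), (powSubPowCoeff M k : R) * d ^ (2 * k + 1) * p ^ (M - k)
      = ∑ k ∈ range (M + 3), (powSubPowCoeff M k : R) * d ^ (2 * k + 1) * p ^ (M + 2 - k) :=
    pow_mul_sum p _ M 2
  have h1 : p * ∑ k ∈ range (M + 2),
        (powSubPowCoeff (M + 1) k : R) * d ^ (2 * k + 1) * p ^ (M + 1 - k)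
      = ∑ k ∈ range (M + 3),
          (powSubPowCoeff (M + 1) k : R) * d ^ (2 * k + 1) * p ^ (M + 2 - k) := by
    simpa only [pow_one] using pow_mul_sum p (fun k => d ^ (2 * k + 1)) (M + 1) 1
  have hshift : d ^ 2 * ∑ k ∈ range (M + 2),
        (powSubPowCoeff (M + 1) k : R) * d ^ (2 * k + 1) * p ^ (M + 1 - k)
      = ∑ k ∈ range (M + 2),
          (powSubPowCoeff (M + 1) k : R) * d ^ (2 * (k + 1) + 1) * p ^ (M + 2 - (k + 1)) := by
    rw [mul_sum]
    refine sum_congr rfl fun k _ => ?_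
    rw [show M + 2 - (k + 1) = M + 1 - k by omega]
    ring
  simp only [← mul_assoc] at h
  linear_combination h + h0 - 2 * h1 - hshift

end powSubPowCoeff

theorem pow_sub_pow_two_mul_add_one (a b : R) (M : ℕ) :
    a ^ (2 * M + 1) - b ^ (2 * M + 1)
      = ∑ k ∈ range (M + 1),
          (powSubPowCoeff M k : R) * (a - b) ^ (2 * k + 1) * (a * b) ^ (M - k) := by
  induction M using Nat.twoStepInduction with
  | zero => simp [powSubPowCoeff]
  | one =>
    rw [sum_range_succ, sum_range_one, powSubPowCoeff.zero_right,
      show powSubPowCoeff 1 1 = 1 from rfl]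
    push_cast
    ring
  | more M ih0 ih1 =>
    rw [powSubPowCoeff.sum_recurrence, ← ih0, ← ih1]
    ring

namespace Polynomial

theorem coeff_one_sub_X_pow (n k : ℕ) :
    ((1 - X : R[X]) ^ n).coeff k = (-1) ^ k * n.choose k := by
  have h : (1 - X : R[X]) ^ n = ∑ m ∈ range (n + 1), C ((-1) ^ m * (n.choose m : R)) * X ^ m := by
    rw [sub_eq_add_neg, add_comm, add_pow]
    refine sum_congr rfl fun m _ => ?_
    rw [neg_pow, one_pow, mul_one, C_mul, C_pow, C_neg, C_1, ← Nat.cast_comm, map_natCast]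
    ring
  rw [h, finsetSum_coeff]
  simp only [coeff_C_mul_X_pow]
  rw [sum_ite_eq]
  split_ifs with hk
  · rfl
  · rw [Nat.choose_eq_zero_of_lt (by simpa using hk), Nat.cast_zero, mul_zero]

theorem coeff_one_sub_X_sq_pow (n k : ℕ) :
    ((1 - X ^ 2 : R[X]) ^ n).coeff (2 * k) = (-1) ^ k * n.choose k := by
  have h : (1 - X ^ 2 : R[X]) ^ n = expand R 2 ((1 - X) ^ n) := by simp
  rw [h, mul_comm, coeff_expand_mul two_pos, coeff_one_sub_X_pow]

theorem coeff_X_pow_mul_one_sub_X_sq_pow (m k j : ℕ) :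
    (X ^ (2 * k + 1) * (1 - X ^ 2 : R[X]) ^ m).coeff (2 * j + 1)
      = if k ≤ j then (-1 : R) ^ (j - k) * m.choose (j - k) else 0 := by
  rw [coeff_X_pow_mul']
  by_cases h : k ≤ j
  · rw [if_pos (by omega), if_pos h, show 2 * j + 1 - (2 * k + 1) = 2 * (j - k) by omega,
      coeff_one_sub_X_sq_pow]
  · rw [if_neg (by omega), if_neg h]

theorem one_add_X_pow_sub_one_sub_X_pow (M : ℕ) :
    ((1 + X) ^ (4 * M + 2) - (1 - X) ^ (4 * M + 2) : R[X])
      = ∑ k ∈ range (M + 1), C ((powSubPowCoeff M k : R) * 4 ^ (2 * k + 1))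
          * (X ^ (2 * k + 1) * (1 - X ^ 2) ^ (2 * (M - k))) := by
  rw [show 4 * M + 2 = 2 * (2 * M + 1) by ring, pow_mul, pow_mul, pow_sub_pow_two_mul_add_one]
  refine sum_congr rfl fun k _ => ?_
  rw [pow_mul]
  simp only [map_mul, map_pow, map_natCast, map_ofNat]
  ring

end Polynomial

theorem two_mul_choose_eq_sum (M j : ℕ) :
    2 * ((4 * M + 2).choose (2 * j + 1) : R)
      = ∑ k ∈ range (j + 1), (powSubPowCoeff M k : R) * 4 ^ (2 * k + 1)
          * ((-1) ^ (j - k) * (2 * (M - k)).choose (j - k)) := by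
  have h := congrArg (coeff · (2 * j + 1)) (one_add_X_pow_sub_one_sub_X_pow (R := R) M)
  simp only [coeff_sub, coeff_one_add_X_pow, coeff_one_sub_X_pow, finsetSum_coeff, coeff_C_mul,
    coeff_X_pow_mul_one_sub_X_sq_pow, mul_ite, mul_zero] at h
  rw [pow_succ, pow_mul, neg_one_sq, one_pow, sum_range_ite_le] at h
  · linear_combination h
  · intro k hk
    rw [powSubPowCoeff.eq_zero_of_lt (by omega), Nat.cast_zero, zero_mul, zero_mul]

theorem stmt_0 (M j : ℕ) :
    ∑ k ∈ Finset.range (j + 1),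
      (-1 : ℚ) ^ (j - k) * 2 ^ (4 * k) * ((4 * M + 2 : ℚ) / (2 * k + 1)) *
        ((2 * (M - k)).choose (j - k)) * ((M + k).choose (2 * k))
    = ((4 * M + 2).choose (2 * j + 1) : ℚ) := by
  refine mul_left_cancel₀ (two_ne_zero (α := ℚ)) ?_
  rw [two_mul_choose_eq_sum, mul_sum]
  refine sum_congr rfl fun k _ => ?_
  rw [powSubPowCoeff.cast_eq_div, pow_succ, pow_mul, pow_mul]
  field_simp
  ring
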